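/- arXiv:math/0702363 — 3 statements merged into one kernel-verified Lean document; each statement's English description precedes it below -/
import Mathlib

section
/- Let G be a group and let A, B be finite subsets of G with |B| ≥ 2. Then |A·B| + |A·₂B| ≥ 2|A|, where A·B is the product set and A·₂B is the set of elements with at least two representations as a product ab with (a,b) ∈ A × B. -/
/-!
Pick distinct `b₁, b₂ ∈ B`. The translates `A * {b₁}` and `A * {b₂}` both have `|A|` elements and
lie in `A * B`, and every element of their intersection is a product `a * b₁ = a' * b₂` with two
different representations. Inclusion–exclusion then gives
`2 |A| = |A b₁ ∪ A b₂| + |A b₁ ∩ A b₂| ≤ |A B| + |A ·₂ B|`.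
-/

open Pointwise

namespace Finset

variable {G : Type*} [Mul G] [DecidableEq G]

def mulRepr (A B : Finset G) (x : G) : Finset (G × G) :=
  (A ×ˢ B).filter fun p => p.1 * p.2 = x

/-- The paper's `A ·₂ B`. -/
def mulTwo (A B : Finset G) : Finset G :=
  (A * B).filter fun x => 2 ≤ (mulRepr A B x).card

theorem mul_singleton_subset_mul {A B : Finset G} {b : G} (hb : b ∈ B) : A * {b} ⊆ A * B :=
  mul_subset_mul_left (singleton_subset_iff.mpr hb)

theorem mul_singleton_inter_subset_mulTwo {A B : Finset G} {b₁ b₂ : G} (hb₁ : b₁ ∈ B)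
    (hb₂ : b₂ ∈ B) (hne : b₁ ≠ b₂) : (A * {b₁}) ∩ (A * {b₂}) ⊆ mulTwo A B := by
  intro x hx
  simp only [mem_inter, mem_mul, mem_singleton, exists_eq_left] at hx
  obtain ⟨⟨a, ha, rfl⟩, a', ha', heq⟩ := hx
  refine mem_filter.mpr ⟨mul_mem_mul ha hb₁, one_lt_card.mpr ⟨(a, b₁), ?_, (a', b₂), ?_, ?_⟩⟩
  · exact mem_filter.mpr ⟨mem_product.mpr ⟨ha, hb₁⟩, rfl⟩
  · exact mem_filter.mpr ⟨mem_product.mpr ⟨ha', hb₂⟩, heq⟩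
  · exact fun h => hne (congrArg Prod.snd h)

theorem two_mul_card_le_card_mul_add_card_mulTwo [IsRightCancelMul G] (A B : Finset G)
    (hB : 2 ≤ B.card) : 2 * A.card ≤ (A * B).card + (mulTwo A B).card := by
  obtain ⟨b₁, hb₁, b₂, hb₂, hne⟩ := one_lt_card.mp hB
  calc 2 * A.card = (A * {b₁}).card + (A * {b₂}).card := by
        rw [card_mul_singleton, card_mul_singleton, two_mul]
    _ = ((A * {b₁}) ∪ (A * {b₂})).card + ((A * {b₁}) ∩ (A * {b₂})).card :=
        (card_union_add_card_inter _ _).symm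
    _ ≤ (A * B).card + (mulTwo A B).card :=
        add_le_add
          (card_le_card (union_subset (mul_singleton_subset_mul hb₁) (mul_singleton_subset_mul hb₂)))
          (card_le_card (mul_singleton_inter_subset_mulTwo hb₁ hb₂ hne))

end Finset

theorem stmt_1 {G : Type*} [Group G] [DecidableEq G] (A B : Finset G)
    (hB : 2 ≤ B.card) :
    2 * A.card ≤
      (A * B).card +
        ((A * B).filter
          (fun x => 2 ≤ ((A ×ˢ B).filter (fun p => p.1 * p.2 = x)).card)).card :=
  Finset.two_mul_card_le_card_mul_add_card_mulTwo A B hB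
end

section
/- Let G be a group, let H and K be subgroups of G, and let S be a set of representatives for the (H,K)-double cosets in G. Then the map sending, for s ∈ S, the coset (H^s ∩ K)g to the pair (Hsg, Kg) is a bijection from the disjoint union over s ∈ S of the coset spaces (H^s ∩ K)\G onto the product (H\G) × (K\G). Here H^s := s⁻¹Hs. -/
theorem stmt_2 {G : Type*} [Group G] (H K : Subgroup G) (S : Set G)
    (hS : ∀ g : G, ∃! s, s ∈ S ∧ ∃ h ∈ H, ∃ k ∈ K, g = h * s * k) :
    ∃ e : (Σ s : S, Quotient (QuotientGroup.rightRel
            ((H.map (MulAut.conj ((s : G))⁻¹).toMonoidHom) ⊓ K))) ≃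
          (Quotient (QuotientGroup.rightRel H)) × (Quotient (QuotientGroup.rightRel K)),
      ∀ (s : S) (g : G),
        e ⟨s, Quotient.mk _ g⟩ = (Quotient.mk _ ((s : G) * g), Quotient.mk _ g) := by
  classical
  have hmem : ∀ (s x : G),
      x ∈ (H.map (MulAut.conj s⁻¹).toMonoidHom) ⊓ K ↔ (s * x * s⁻¹ ∈ H ∧ x ∈ K) := by
    intro s x
    simp only [Subgroup.mem_inf, Subgroup.mem_map, MulEquiv.coe_toMonoidHom, MulAut.conj_apply]
    constructor
    · rintro ⟨⟨h, hh, rfl⟩, hk⟩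
      refine ⟨?_, hk⟩
      convert hh using 1
      group
    · rintro ⟨hh, hk⟩
      exact ⟨⟨s * x * s⁻¹, hh, by group⟩, hk⟩
  set F : (Σ s : S, Quotient (QuotientGroup.rightRel
            ((H.map (MulAut.conj ((s : G))⁻¹).toMonoidHom) ⊓ K))) →
      (Quotient (QuotientGroup.rightRel H)) × (Quotient (QuotientGroup.rightRel K)) :=
    fun p => Quotient.liftOn p.2
      (fun g => (Quotient.mk _ ((p.1 : G) * g), Quotient.mk _ g))
      (by
        intro a b hab
        obtain ⟨h1, h2⟩ := (hmem _ _).mp (QuotientGroup.rightRel_apply.mp hab)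
        refine Prod.ext ?_ ?_
        · refine Quotient.sound' ?_
          rw [QuotientGroup.rightRel_apply]
          convert h1 using 1
          group
        · exact Quotient.sound' (QuotientGroup.rightRel_apply.mpr h2)) with hF
  have hinj : Function.Injective F := by
    rintro ⟨s, q⟩ ⟨t, r⟩ hEq
    induction q using Quotient.ind with | _ g => ?_
    induction r using Quotient.ind with | _ g' => ?_
    have h1 : (Quotient.mk _ ((s : G) * g) : Quotient (QuotientGroup.rightRel H))
        = Quotient.mk _ ((t : G) * g') := congrArg Prod.fst hEq
    have h2 : (Quotient.mk _ g : Quotient (QuotientGroup.rightRel K))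
        = Quotient.mk _ g' := congrArg Prod.snd hEq
    have hH : (t : G) * g' * ((s : G) * g)⁻¹ ∈ H :=
      QuotientGroup.rightRel_apply.mp (Quotient.exact' h1)
    have hK : g' * g⁻¹ ∈ K := QuotientGroup.rightRel_apply.mp (Quotient.exact' h2)
    have hst : (s : G) = (t : G) := by
      obtain ⟨u, -, hu⟩ := hS (s : G)
      have e1 : (s : G) = u := hu (s : G) ⟨s.2, 1, one_mem H, 1, one_mem K, by group⟩
      have e2 : (t : G) = u := by
        refine hu (t : G) ⟨t.2, ((t : G) * g' * ((s : G) * g)⁻¹)⁻¹, inv_mem hH,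
          g' * g⁻¹, hK, ?_⟩
        group
      rw [e1, e2]
    have hst' : s = t := Subtype.ext hst
    subst hst'
    refine congrArg (Sigma.mk s) ?_
    refine Quotient.sound' ?_
    rw [QuotientGroup.rightRel_apply, hmem]
    refine ⟨?_, hK⟩
    convert hH using 1
    group
  have hsurj : Function.Surjective F := by
    rintro ⟨q1, q2⟩
    induction q1 using Quotient.ind with | _ g1 => ?_
    induction q2 using Quotient.ind with | _ g2 => ?_
    obtain ⟨s, ⟨hsS, h, hh, k, hk, heq⟩, -⟩ := hS (g1 * g2⁻¹)
    refine ⟨⟨⟨s, hsS⟩, Quotient.mk _ (k * g2)⟩, ?_⟩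
    have hg1 : g1 = h * s * k * g2 := by rw [← heq]; group
    refine Prod.ext ?_ ?_
    · refine Quotient.sound' ?_
      rw [QuotientGroup.rightRel_apply]
      show g1 * (s * (k * g2))⁻¹ ∈ H
      have : g1 * (s * (k * g2))⁻¹ = h := by rw [hg1]; group
      rw [this]; exact hh
    · refine Quotient.sound' ?_
      rw [QuotientGroup.rightRel_apply]
      show g2 * (k * g2)⁻¹ ∈ K
      have : g2 * (k * g2)⁻¹ = k⁻¹ := by group
      rw [this]; exact inv_mem hk
  exact ⟨Equiv.ofBijective F ⟨hinj, hsurj⟩, fun s g => rfl⟩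
end

section
/- Let G be a group, A, B finite subsets of G, and suppose that for every pair b₁, b₂ ∈ B we have Ab₁ = Ab₂. Let L := ⟨b₁b₂⁻¹ : b₁, b₂ ∈ B⟩. If A and B are nonempty, then AL = A, L is finite, and |L| ≥ |B|. -/
open Pointwise

theorem stmt_14 {G : Type*} [Group G] [DecidableEq G] (A B : Finset G)
    (hA : A.Nonempty) (hB : B.Nonempty)
    (h : ∀ b₁ ∈ B, ∀ b₂ ∈ B, A * ({b₁} : Finset G) = A * {b₂})
    (L : Subgroup G)
    (hL : L = Subgroup.closure {g : G | ∃ b₁ ∈ B, ∃ b₂ ∈ B, g = b₁ * b₂⁻¹}) :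
    (A : Set G) * (L : Set G) = (A : Set G) ∧ (L : Set G).Finite ∧
      B.card ≤ Nat.card L := by
  obtain ⟨a, ha⟩ := hA
  obtain ⟨b₀, hb₀⟩ := hB
  have key : ∀ l ∈ L, A * ({l} : Finset G) = A := by
    intro l hl
    rw [hL] at hl
    induction hl using Subgroup.closure_induction with
    | mem g hg =>
      obtain ⟨b₁, hb₁, b₂, hb₂, rfl⟩ := hg
      calc A * ({b₁ * b₂⁻¹} : Finset G)
          = A * ({b₁} * {b₂⁻¹}) := by
            rw [Finset.singleton_mul_singleton]
        _ = A * {b₁} * {b₂⁻¹} := (mul_assoc _ _ _).symm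
        _ = A * {b₂} * {b₂⁻¹} := by rw [h b₁ hb₁ b₂ hb₂]
        _ = A * ({b₂ * b₂⁻¹} : Finset G) := by
            rw [mul_assoc, Finset.singleton_mul_singleton]
        _ = A := by rw [mul_inv_cancel, show ({(1:G)} : Finset G) = 1 from rfl, mul_one]
    | one => rw [show ({(1:G)} : Finset G) = 1 from rfl, mul_one]
    | mul x y hx hy hx' hy' =>
      calc A * ({x * y} : Finset G)
          = A * ({x} * {y}) := by rw [Finset.singleton_mul_singleton]
        _ = A * {x} * {y} := (mul_assoc _ _ _).symm
        _ = A := by rw [hx', hy']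
    | inv x hx hx' =>
      have : A * ({x} : Finset G) * {x⁻¹} = A * {x⁻¹} := by rw [hx']
      calc A * ({x⁻¹} : Finset G)
          = A * {x} * {x⁻¹} := this.symm
        _ = A * ({x * x⁻¹} : Finset G) := by
            rw [mul_assoc, Finset.singleton_mul_singleton]
        _ = A := by rw [mul_inv_cancel, show ({(1:G)} : Finset G) = 1 from rfl, mul_one]
  have memkey : ∀ x ∈ A, ∀ l ∈ L, x * l ∈ A := by
    intro x hx l hl
    have : x * l ∈ A * ({l} : Finset G) :=
      Finset.mul_mem_mul hx (Finset.mem_singleton_self l)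
    rwa [key l hl] at this
  have part1 : (A : Set G) * (L : Set G) = (A : Set G) := by
    ext x
    constructor
    · rintro ⟨u, hu, v, hv, rfl⟩
      exact_mod_cast memkey u hu v hv
    · intro hx
      exact ⟨x, hx, 1, L.one_mem, mul_one x⟩
  have hsub : (L : Set G) ⊆ (fun x => a⁻¹ * x) '' (A : Set G) := by
    intro l hl
    exact ⟨a * l, memkey a ha l hl, by group⟩
  have hfin : (L : Set G).Finite :=
    Set.Finite.subset ((A : Set G).toFinite.image _) hsub
  refine ⟨part1, hfin, ?_⟩
  have himg : ((B.image (fun b => b * b₀⁻¹) : Finset G) : Set G) ⊆ (L : Set G) := by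
    intro x hx
    simp only [Finset.coe_image, Set.mem_image, Finset.mem_coe] at hx
    obtain ⟨b, hb, rfl⟩ := hx
    rw [hL]
    exact Subgroup.subset_closure ⟨b, hb, b₀, hb₀, rfl⟩
  have hcard : (B.image (fun b => b * b₀⁻¹)).card = B.card :=
    Finset.card_image_of_injective _ (mul_left_injective b₀⁻¹)
  calc B.card = ((B.image (fun b => b * b₀⁻¹) : Finset G) : Set G).ncard := by
        rw [Set.ncard_coe_finset, hcard]
    _ ≤ (L : Set G).ncard := Set.ncard_le_ncard himg hfin
    _ = Nat.card L := (Nat.card_coe_set_eq _).symm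
end
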